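/- arXiv:1810.04246 — 6 statements merged into one kernel-verified Lean document; each statement's English description precedes it below -/
import Mathlib

section
/- Let N and K be positive integers and let Q and P be positive row-stochastic N×K matrices. Then F(Q,P) ≤ I(Q), and equality holds if and only if P = Q. In particular, F(Q,Q) = I(Q), i.e., the matrix P maximizing the penalized ADM objective F(Q,·) over positive row-stochastic matrices is P = Q. -/
open Finset

/-- A matrix `Q : Fin N → Fin K → ℝ` is row-stochastic if all entries are
nonnegative and each row sums to 1. -/
def RowStochastic {N K : ℕ} (Q : Fin N → Fin K → ℝ) : Prop :=
  (∀ i k, 0 ≤ Q i k) ∧ ∀ i, ∑ k, Q i k = 1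

/-- All entries strictly positive. -/
def PosMat {N K : ℕ} (Q : Fin N → Fin K → ℝ) : Prop :=
  ∀ i k, 0 < Q i k

/-- Empirical label marginal `q̂_k = (1/N) Σ_i q_{ik}`. -/
noncomputable def marg {N K : ℕ} (Q : Fin N → Fin K → ℝ) (k : Fin K) : ℝ :=
  (1 / (N : ℝ)) * ∑ i, Q i k

/-- `KL(Q‖P) = (1/N) Σ_i Σ_k q_{ik} log(q_{ik}/p_{ik})`. -/
noncomputable def KLpen {N K : ℕ} (Q P : Fin N → Fin K → ℝ) : ℝ :=
  (1 / (N : ℝ)) * ∑ i, ∑ k, Q i k * Real.log (Q i k / P i k)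

/-- Empirical mutual information
`I(P) = (1/N) Σ_{i,k} p_{ik} log p_{ik} − Σ_k p̂_k log p̂_k`. -/
noncomputable def MI {N K : ℕ} (P : Fin N → Fin K → ℝ) : ℝ :=
  (1 / (N : ℝ)) * ∑ i, ∑ k, P i k * Real.log (P i k)
    - ∑ k, marg P k * Real.log (marg P k)

/-- Penalized ADM objective
`F(Q,P) = (1/N) Σ_{i,k} q_{ik} log p_{ik} − Σ_k q̂_k log q̂_k − KL(Q‖P)`. -/
noncomputable def Fobj {N K : ℕ} (Q P : Fin N → Fin K → ℝ) : ℝ :=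
  (1 / (N : ℝ)) * ∑ i, ∑ k, Q i k * Real.log (P i k)
    - ∑ k, marg Q k * Real.log (marg Q k) - KLpen Q P


lemma term_bound {q p : ℝ} (hq : 0 < q) (hp : 0 < p) :
    q - p ≤ q * Real.log (q / p) := by
  have h : Real.log (p / q) ≤ p / q - 1 := Real.log_le_sub_one_of_pos (by positivity)
  have hlog0 : Real.log (q / p) = -Real.log (p / q) := by
    rw [← Real.log_inv, inv_div]
  have hlog : q * Real.log (q / p) = -(q * Real.log (p / q)) := by rw [hlog0]; ring
  have key : q * (p / q) = p := by field_simp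
  have h2 := mul_le_mul_of_nonneg_left h hq.le
  have expand : q * (p / q - 1) = q * (p / q) - q := by ring
  linarith

lemma term_bound_strict {q p : ℝ} (hq : 0 < q) (hp : 0 < p) (hne : p ≠ q) :
    q - p < q * Real.log (q / p) := by
  have hne' : p / q ≠ 1 := by
    intro h; exact hne (by field_simp at h; linarith)
  have h : Real.log (p / q) < p / q - 1 := Real.log_lt_sub_one_of_pos (by positivity) hne'
  have hlog0 : Real.log (q / p) = -Real.log (p / q) := by
    rw [← Real.log_inv, inv_div]
  have hlog : q * Real.log (q / p) = -(q * Real.log (p / q)) := by rw [hlog0]; ring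
  have key : q * (p / q) = p := by field_simp
  have h2 := mul_lt_mul_of_pos_left h hq
  have expand : q * (p / q - 1) = q * (p / q) - q := by ring
  linarith

lemma gibbs {ι : Type*} (s : Finset ι) (q p : ι → ℝ)
    (hq : ∀ i ∈ s, 0 < q i) (hp : ∀ i ∈ s, 0 < p i)
    (hsum : ∑ i ∈ s, q i = ∑ i ∈ s, p i) :
    0 ≤ ∑ i ∈ s, q i * Real.log (q i / p i) ∧
    ((∑ i ∈ s, q i * Real.log (q i / p i)) = 0 ↔ ∀ i ∈ s, p i = q i) := by
  have hle : ∑ i ∈ s, (q i - p i) ≤ ∑ i ∈ s, q i * Real.log (q i / p i) :=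
    Finset.sum_le_sum fun i hi => term_bound (hq i hi) (hp i hi)
  have hzero : ∑ i ∈ s, (q i - p i) = 0 := by rw [Finset.sum_sub_distrib, hsum, sub_self]
  refine ⟨by linarith, ⟨fun h0 => ?_, fun h => ?_⟩⟩
  · by_contra hc
    push_neg at hc
    obtain ⟨j, hjs, hj⟩ := hc
    have hlt : ∑ i ∈ s, (q i - p i) < ∑ i ∈ s, q i * Real.log (q i / p i) :=
      Finset.sum_lt_sum (fun i hi => term_bound (hq i hi) (hp i hi))
        ⟨j, hjs, term_bound_strict (hq j hjs) (hp j hjs) hj⟩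
    linarith
  · refine Finset.sum_eq_zero fun i hi => ?_
    rw [h i hi, div_self (ne_of_gt (hq i hi)), Real.log_one, mul_zero]

lemma KL_expand {N K : ℕ} (Q P : Fin N → Fin K → ℝ) (hQpos : PosMat Q) (hPpos : PosMat P) :
    KLpen Q P = (1 / (N : ℝ)) * ∑ i, ∑ k, Q i k * Real.log (Q i k)
      - (1 / (N : ℝ)) * ∑ i, ∑ k, Q i k * Real.log (P i k) := by
  unfold KLpen
  rw [← mul_sub, ← Finset.sum_sub_distrib]
  congr 1
  refine Finset.sum_congr rfl fun i _ => ?_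
  rw [← Finset.sum_sub_distrib]
  refine Finset.sum_congr rfl fun k _ => ?_
  rw [Real.log_div (hQpos i k).ne' (hPpos i k).ne']
  ring

lemma Fobj_eq {N K : ℕ} (Q P : Fin N → Fin K → ℝ) (hQpos : PosMat Q) (hPpos : PosMat P) :
    Fobj Q P = MI Q - 2 * KLpen Q P := by
  have h := KL_expand Q P hQpos hPpos
  unfold Fobj MI
  linarith

/-- `F(Q,P) ≤ I(Q)` with equality iff `P = Q`; in particular
`F(Q,Q) = I(Q)`. -/
theorem stmt1 (N K : ℕ) (hN : 0 < N) (hK : 0 < K)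
    (Q P : Fin N → Fin K → ℝ)
    (hQ : RowStochastic Q) (hQpos : PosMat Q)
    (hP : RowStochastic P) (hPpos : PosMat P) :
    Fobj Q P ≤ MI Q ∧ (Fobj Q P = MI Q ↔ P = Q) ∧ Fobj Q Q = MI Q := by
  have hrow := fun i => gibbs Finset.univ (Q i) (P i)
    (fun k _ => hQpos i k) (fun k _ => hPpos i k) (by rw [hQ.2 i, hP.2 i])
  have hNpos : (0:ℝ) < 1 / (N : ℝ) := by positivity
  have hKLnn : 0 ≤ KLpen Q P := by
    unfold KLpen
    exact mul_nonneg hNpos.le (Finset.sum_nonneg fun i _ => (hrow i).1)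
  have heq := Fobj_eq Q P hQpos hPpos
  have hself : Fobj Q Q = MI Q := by
    have hz : KLpen Q Q = 0 := by
      unfold KLpen
      rw [Finset.sum_eq_zero fun i _ => Finset.sum_eq_zero fun k _ => by
        rw [div_self (hQpos i k).ne', Real.log_one, mul_zero]]
      ring
    rw [Fobj_eq Q Q hQpos hQpos, hz]; ring
  refine ⟨by linarith, ⟨fun h0 => ?_, fun h => by rw [h]; exact hself⟩, hself⟩
  · have hKL0 : KLpen Q P = 0 := by linarith
    unfold KLpen at hKL0
    rw [mul_eq_zero] at hKL0
    rcases hKL0 with h1 | h1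
    · exact absurd h1 hNpos.ne'
    · rw [Finset.sum_eq_zero_iff_of_nonneg (fun i _ => (hrow i).1)] at h1
      funext i k
      exact ((hrow i).2.mp (h1 i (Finset.mem_univ i))) k (Finset.mem_univ k)
end

section
/- Let N and K be positive integers, let P be a positive row-stochastic N×K matrix, and let Q be a positive row-stochastic N×K matrix such that F(Q,P) ≥ F(Q',P) for every positive row-stochastic N×K matrix Q' (i.e., Q maximizes the target-estimation step of the ADM scheme). Then the empirical mutual information does not decrease after one ADM iteration in which the new posterior matrix is set to Q: I(Q) ≥ I(P). -/
open Finset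

/-- if `Q` maximizes the target-estimation step `F(·,P)` over
positive row-stochastic matrices, then `I(Q) ≥ I(P)`. -/
theorem stmt2 (N K : ℕ) (hN : 0 < N) (hK : 0 < K)
    (P Q : Fin N → Fin K → ℝ)
    (hP : RowStochastic P) (hPpos : PosMat P)
    (hQ : RowStochastic Q) (hQpos : PosMat Q)
    (hmax : ∀ Q' : Fin N → Fin K → ℝ, RowStochastic Q' → PosMat Q' →
      Fobj Q' P ≤ Fobj Q P) :
    MI P ≤ MI Q := by
  -- Gibbs: each row KL is nonnegative
  have gibbs : ∀ i : Fin N, 0 ≤ ∑ k, Q i k * Real.log (Q i k / P i k) := by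
    intro i
    have h : ∀ k : Fin K, Q i k - P i k ≤ Q i k * Real.log (Q i k / P i k) := by
      intro k
      have hq := hQpos i k
      have hp := hPpos i k
      have hlog : Real.log (P i k / Q i k) ≤ P i k / Q i k - 1 :=
        Real.log_le_sub_one_of_pos (by positivity)
      have hrw : Real.log (Q i k / P i k) = -Real.log (P i k / Q i k) := by
        rw [← Real.log_inv]; congr 1; field_simp
      rw [hrw]
      have : Q i k * (P i k / Q i k - 1) = P i k - Q i k := by field_simp
      nlinarith [mul_le_mul_of_nonneg_left hlog hq.le]
    calc (0:ℝ) = ∑ k, (Q i k - P i k) := by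
          rw [Finset.sum_sub_distrib, hQ.2 i, hP.2 i]; ring
      _ ≤ _ := Finset.sum_le_sum fun k _ => h k
  have hKLQ : 0 ≤ KLpen Q P := by
    unfold KLpen
    have : 0 ≤ ∑ i, ∑ k, Q i k * Real.log (Q i k / P i k) :=
      Finset.sum_nonneg fun i _ => gibbs i
    positivity
  -- F(P,P) = MI P
  have hFPP : Fobj P P = MI P := by
    unfold Fobj MI KLpen
    have : ∀ i : Fin N, ∑ k, P i k * Real.log (P i k / P i k) = 0 := by
      intro i
      refine Finset.sum_eq_zero fun k _ => ?_
      rw [div_self (hPpos i k).ne', Real.log_one, mul_zero]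
    simp [this]
  -- MI Q - F(Q,P) = 2 * KLpen Q P
  have hFQ : Fobj Q P = MI Q - 2 * KLpen Q P := by
    unfold Fobj MI KLpen
    have hsum : ∀ i : Fin N, ∑ k, Q i k * Real.log (Q i k / P i k)
        = ∑ k, (Q i k * Real.log (Q i k) - Q i k * Real.log (P i k)) := by
      intro i
      refine Finset.sum_congr rfl fun k _ => ?_
      rw [Real.log_div (hQpos i k).ne' (hPpos i k).ne']; ring
    simp only [hsum, Finset.sum_sub_distrib]
    ring
  have h1 : MI P ≤ Fobj Q P := hFPP ▸ hmax P hP hPpos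
  linarith
end

section
/- Let N and K be positive integers and let (P^{(t)})_{t∈ℕ} be a sequence of positive row-stochastic N×K matrices such that for every t, P^{(t+1)} maximizes F(·, P^{(t)}) over all positive row-stochastic N×K matrices (this encodes the ADM iteration in which the target matrix Q^{(t)} maximizes the penalized objective given P^{(t)} and the posteriors are then updated to P^{(t+1)} = Q^{(t)}). Then the sequence of empirical mutual information values I(P^{(t)}) is non-decreasing in t: I(P^{(t+1)}) ≥ I(P^{(t)}) for all t. -/
open Finset

lemma fobj_self {N K : ℕ} (P : Fin N → Fin K → ℝ) (hP : PosMat P) :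
    Fobj P P = MI P := by
  unfold Fobj MI KLpen
  have h : ∀ i k, P i k * Real.log (P i k / P i k) = 0 := by
    intro i k
    rw [div_self (hP i k).ne', Real.log_one, mul_zero]
  simp [h]

lemma fobj_le {N K : ℕ} (Q P : Fin N → Fin K → ℝ)
    (hQ : RowStochastic Q) (hQp : PosMat Q) (hP : RowStochastic P) (hPp : PosMat P) :
    Fobj Q P ≤ MI Q := by
  unfold Fobj MI KLpen
  have key : ∀ i : Fin N, ∑ k, Q i k * Real.log (P i k) ≤ ∑ k, Q i k * Real.log (Q i k) := by
    intro i
    have h : ∑ k, (Q i k * Real.log (P i k) - Q i k * Real.log (Q i k)) ≤ 0 := by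
      calc ∑ k, (Q i k * Real.log (P i k) - Q i k * Real.log (Q i k))
          = ∑ k, Q i k * Real.log (P i k / Q i k) := by
            refine Finset.sum_congr rfl fun k _ => ?_
            rw [Real.log_div (hPp i k).ne' (hQp i k).ne']; ring
        _ ≤ ∑ k, Q i k * (P i k / Q i k - 1) := by
            refine Finset.sum_le_sum fun k _ => ?_
            exact mul_le_mul_of_nonneg_left
              (Real.log_le_sub_one_of_pos (div_pos (hPp i k) (hQp i k))) (hQ.1 i k)
        _ = ∑ k, (P i k - Q i k) := by
            refine Finset.sum_congr rfl fun k _ => ?_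
            rw [mul_sub, mul_one, mul_div_cancel₀ _ (hQp i k).ne']
        _ = 0 := by rw [Finset.sum_sub_distrib, hP.2 i, hQ.2 i, sub_self]
    rw [Finset.sum_sub_distrib] at h
    linarith
  have hsum : ∑ i, ∑ k, Q i k * Real.log (P i k) ≤ ∑ i, ∑ k, Q i k * Real.log (Q i k) :=
    Finset.sum_le_sum fun i _ => key i
  have hN0 : (0:ℝ) ≤ 1 / (N : ℝ) := by positivity
  have h2 : ∀ i k, Q i k * Real.log (Q i k / P i k)
      = Q i k * Real.log (Q i k) - Q i k * Real.log (P i k) := by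
    intro i k
    rw [Real.log_div (hQp i k).ne' (hPp i k).ne']; ring
  simp only [h2, Finset.sum_sub_distrib]
  nlinarith [mul_le_mul_of_nonneg_left hsum hN0]

/-- along ADM iterates `P^{(t+1)} = argmax F(·, P^{(t)})` over
positive row-stochastic matrices, the empirical mutual information
`I(P^{(t)})` is non-decreasing. -/
theorem stmt3 (N K : ℕ) (hN : 0 < N) (hK : 0 < K)
    (P : ℕ → Fin N → Fin K → ℝ)
    (hP : ∀ t, RowStochastic (P t) ∧ PosMat (P t))
    (hmax : ∀ t, ∀ Q' : Fin N → Fin K → ℝ, RowStochastic Q' → PosMat Q' →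
      Fobj Q' (P t) ≤ Fobj (P (t + 1)) (P t)) :
    ∀ t, MI (P t) ≤ MI (P (t + 1)) := by
  intro t
  have h1 := hmax t (P t) (hP t).1 (hP t).2
  calc MI (P t) = Fobj (P t) (P t) := (fobj_self (P t) (hP t).2).symm
    _ ≤ Fobj (P (t + 1)) (P t) := h1
    _ ≤ MI (P (t + 1)) := fobj_le _ _ (hP (t+1)).1 (hP (t+1)).2 (hP t).1 (hP t).2
end

section
/- Let N, K, d be positive integers, let λ > 0, let z_1,…,z_N ∈ ℝ^d, θ_1,…,θ_K ∈ ℝ^d and b_1,…,b_K ∈ ℝ, and define the multilogit posteriors p_{ik} = exp(⟨θ_k, z_i⟩ + b_k)/Z_i with Z_i = Σ_{j=1}^K exp(⟨θ_j, z_i⟩ + b_j). Let Q be a positive row-stochastic N×K matrix that is exactly balanced (Σ_{i=1}^N q_{ik} = N/K for every k). Then the regularized negative ADM mutual-information objective satisfies the exact identity: Σ_{k=1}^K q̂_k log q̂_k − (1/N)·Σ_{i,k} q_{ik} log p_{ik} + KL(Q‖P) + λ Σ_{k=1}^K ‖θ_k‖² = Σ_{k=1}^K q̂_k (log q̂_k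 − 2 b_k) + (1/N)·Σ_{i,k} q_{ik} log q_{ik} + (2/N)·Σ_{i=1}^N log Z_i + (1/(NλK))·( Σ_{i,k} q_{ik} ‖z_i − θ'_k‖² − Σ_{i=1}^N ‖z_i‖² ), where θ'_k = λK·θ_k. -/
open Finset RealInnerProductSpace

/-- exact identity relating the regularized negative ADM
mutual-information objective, for multilogit posteriors
`p_{ik} = exp(⟨θ_k, z_i⟩ + b_k)/Z_i`, with an exactly balanced positive
row-stochastic `Q`, to a soft K-means-type expression with prototypes
`θ'_k = λK θ_k`. -/
theorem stmt5 (N K d : ℕ) (hN : 0 < N) (hK : 0 < K) (hd : 0 < d)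
    (lam : ℝ) (hlam : 0 < lam)
    (z : Fin N → EuclideanSpace ℝ (Fin d))
    (θ : Fin K → EuclideanSpace ℝ (Fin d))
    (b : Fin K → ℝ)
    (Z : Fin N → ℝ) (hZ : ∀ i, Z i = ∑ j, Real.exp (⟪θ j, z i⟫ + b j))
    (P : Fin N → Fin K → ℝ)
    (hP : ∀ i k, P i k = Real.exp (⟪θ k, z i⟫ + b k) / Z i)
    (Q : Fin N → Fin K → ℝ) (hQ : RowStochastic Q) (hQpos : PosMat Q)
    (hbal : ∀ k, ∑ i, Q i k = (N : ℝ) / (K : ℝ)) :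
    (∑ k, marg Q k * Real.log (marg Q k))
      - (1 / (N : ℝ)) * ∑ i, ∑ k, Q i k * Real.log (P i k)
      + KLpen Q P + lam * ∑ k, ‖θ k‖ ^ 2 =
    (∑ k, marg Q k * (Real.log (marg Q k) - 2 * b k))
      + (1 / (N : ℝ)) * ∑ i, ∑ k, Q i k * Real.log (Q i k)
      + (2 / (N : ℝ)) * ∑ i, Real.log (Z i)
      + (1 / ((N : ℝ) * lam * (K : ℝ))) *
          ((∑ i, ∑ k, Q i k * ‖z i - (lam * (K : ℝ)) • θ k‖ ^ 2)
            - ∑ i, ‖z i‖ ^ 2) := by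

  obtain ⟨hQnn, hrow⟩ := hQ
  have hN0 : (N : ℝ) ≠ 0 := by positivity
  have hK0 : (K : ℝ) ≠ 0 := by positivity
  have hZpos : ∀ i, 0 < Z i := by
    intro i
    rw [hZ]
    exact Finset.sum_pos (fun j _ => Real.exp_pos _) ⟨⟨0, hK⟩, Finset.mem_univ _⟩
  have hPpos : ∀ i k, 0 < P i k := fun i k => by
    rw [hP]; exact div_pos (Real.exp_pos _) (hZpos i)
  have hlogP : ∀ i k, Real.log (P i k) = ⟪θ k, z i⟫ + b k - Real.log (Z i) := by
    intro i k
    rw [hP, Real.log_div (Real.exp_ne_zero _) (ne_of_gt (hZpos i)), Real.log_exp]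
  have hnorm : ∀ i k, ‖z i - (lam * (K : ℝ)) • θ k‖ ^ 2
      = ‖z i‖ ^ 2 - 2 * (lam * K) * ⟪θ k, z i⟫ + (lam * K) ^ 2 * ‖θ k‖ ^ 2 := by
    intro i k
    rw [norm_sub_sq_real, real_inner_smul_right, norm_smul, Real.norm_eq_abs,
      abs_of_pos (by positivity), real_inner_comm (z i) (θ k)]
    ring
  have hmarg : ∀ k, marg Q k = 1 / (K : ℝ) := by
    intro k
    rw [marg, hbal]
    field_simp
  have e1 : ∑ i, ∑ k, Q i k * Real.log (P i k)
      = (∑ i, ∑ k, Q i k * ⟪θ k, z i⟫) + ((N : ℝ) / K) * (∑ k, b k)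
        - ∑ i, Real.log (Z i) := by
    have h1 : ∀ i, ∑ k, Q i k * Real.log (P i k)
        = (∑ k, Q i k * ⟪θ k, z i⟫) + (∑ k, Q i k * b k) - Real.log (Z i) := by
      intro i
      calc ∑ k, Q i k * Real.log (P i k)
          = ∑ k, (Q i k * ⟪θ k, z i⟫ + Q i k * b k - Q i k * Real.log (Z i)) := by
            refine Finset.sum_congr rfl fun k _ => ?_
            rw [hlogP]; ring
        _ = (∑ k, Q i k * ⟪θ k, z i⟫) + (∑ k, Q i k * b k)
            - (∑ k, Q i k) * Real.log (Z i) := by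
            rw [Finset.sum_sub_distrib, Finset.sum_add_distrib, Finset.sum_mul]
        _ = _ := by rw [hrow, one_mul]
    rw [Finset.sum_congr rfl fun i _ => h1 i, Finset.sum_sub_distrib,
      Finset.sum_add_distrib]
    congr 2
    rw [Finset.sum_comm, Finset.mul_sum]
    refine Finset.sum_congr rfl fun k _ => ?_
    rw [← Finset.sum_mul, hbal]
  have e2 : ∑ i, ∑ k, Q i k * Real.log (Q i k / P i k)
      = (∑ i, ∑ k, Q i k * Real.log (Q i k)) - ∑ i, ∑ k, Q i k * Real.log (P i k) := by
    rw [← Finset.sum_sub_distrib]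
    refine Finset.sum_congr rfl fun i _ => ?_
    rw [← Finset.sum_sub_distrib]
    refine Finset.sum_congr rfl fun k _ => ?_
    rw [Real.log_div (ne_of_gt (hQpos i k)) (ne_of_gt (hPpos i k))]
    ring
  have e3 : ∑ i, ∑ k, Q i k * ‖z i - (lam * (K : ℝ)) • θ k‖ ^ 2
      = (∑ i, ‖z i‖ ^ 2) - 2 * (lam * K) * (∑ i, ∑ k, Q i k * ⟪θ k, z i⟫)
        + (lam * K) ^ 2 * ((N : ℝ) / K) * (∑ k, ‖θ k‖ ^ 2) := by
    have h1 : ∀ i, ∑ k, Q i k * ‖z i - (lam * (K : ℝ)) • θ k‖ ^ 2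
        = ‖z i‖ ^ 2 - 2 * (lam * K) * (∑ k, Q i k * ⟪θ k, z i⟫)
          + (lam * K) ^ 2 * (∑ k, Q i k * ‖θ k‖ ^ 2) := by
      intro i
      calc ∑ k, Q i k * ‖z i - (lam * (K : ℝ)) • θ k‖ ^ 2
          = ∑ k, (Q i k * ‖z i‖ ^ 2 - 2 * (lam * K) * (Q i k * ⟪θ k, z i⟫)
              + (lam * K) ^ 2 * (Q i k * ‖θ k‖ ^ 2)) := by
            refine Finset.sum_congr rfl fun k _ => ?_
            rw [hnorm]; ring
        _ = (∑ k, Q i k) * ‖z i‖ ^ 2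
            - 2 * (lam * K) * (∑ k, Q i k * ⟪θ k, z i⟫)
            + (lam * K) ^ 2 * (∑ k, Q i k * ‖θ k‖ ^ 2) := by
            rw [Finset.sum_add_distrib, Finset.sum_sub_distrib, Finset.sum_mul,
              ← Finset.mul_sum, ← Finset.mul_sum]
        _ = _ := by rw [hrow, one_mul]
    have hswap : ∑ i, ∑ k, Q i k * ‖θ k‖ ^ 2
        = ((N : ℝ) / K) * ∑ k, ‖θ k‖ ^ 2 := by
      rw [Finset.sum_comm, Finset.mul_sum]
      refine Finset.sum_congr rfl fun k _ => ?_
      rw [← Finset.sum_mul, hbal]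
    rw [Finset.sum_congr rfl fun i _ => h1 i, Finset.sum_add_distrib,
      Finset.sum_sub_distrib, ← Finset.mul_sum, ← Finset.mul_sum, hswap]
    ring
  have e4 : ∑ k, (1 / (K : ℝ)) * (Real.log (1 / (K : ℝ)) - 2 * b k)
      = (K : ℝ) * ((1 / (K : ℝ)) * Real.log (1 / (K : ℝ)))
        - (2 / K) * ∑ k, b k := by
    have h : ∀ k : Fin K, (1 / (K : ℝ)) * (Real.log (1 / (K : ℝ)) - 2 * b k)
        = (1 / (K : ℝ)) * Real.log (1 / (K : ℝ)) - (2 / K) * b k := fun k => by ring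
    rw [Finset.sum_congr rfl fun k _ => h k, Finset.sum_sub_distrib,
      Finset.sum_const, Finset.card_univ, Fintype.card_fin, nsmul_eq_mul,
      ← Finset.mul_sum]
  have e5 : ∑ _k : Fin K, (1 / (K : ℝ)) * Real.log (1 / (K : ℝ))
      = (K : ℝ) * ((1 / (K : ℝ)) * Real.log (1 / (K : ℝ))) := by
    rw [Finset.sum_const, Finset.card_univ, Fintype.card_fin, nsmul_eq_mul]
  simp only [hmarg]
  rw [KLpen, e2, e1, e3, e4, e5]
  field_simp
  ring
end

section
/- Let N, K, d be positive integers, let λ > 0, let z_1,…,z_N ∈ ℝ^d, θ_1,…,θ_K ∈ ℝ^d, and set the biases to their optimal values b_k = (1/2)·log q̂_k; define the multilogit posteriors p_{ik} = exp(⟨θ_k, z_i⟩ + b_k)/Z_i with Z_i = Σ_{j=1}^K exp(⟨θ_j, z_i⟩ + b_j). Let Q be a positive row-stochastic N×K matrix that is exactly balanced (Σ_{i=1}^N q_{ik} = N/K for every k, so that q̂_k = 1/K and b_k = −(1/2)·log K). Then the regularized negative ADM mutual-information objective equals (2/N)·Σ_{i=1}^N log Z_i plus 1/(NλK) times the soft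 and regularized K-means (SR-K-means) loss: Σ_{k=1}^K q̂_k log q̂_k − (1/N)·Σ_{i,k} q_{ik} log p_{ik} + KL(Q‖P) + λ Σ_{k=1}^K ‖θ_k‖² = (2/N)·Σ_{i=1}^N log Z_i + (1/(NλK))·( Σ_{i,k} q_{ik} ‖z_i − θ'_k‖² + λK·Σ_{i,k} q_{ik} log q_{ik} − Σ_{i=1}^N ‖z_i‖² ), where θ'_k = λK·θ_k. -/
open Finset RealInnerProductSpace

/-- with the optimal biases `b_k = (1/2) log q̂_k` and an exactly
balanced positive row-stochastic `Q` (so that `q̂_k = 1/K`), the regularized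
negative ADM mutual-information objective equals `(2/N) Σ_i log Z_i` plus
`1/(NλK)` times the SR-K-means loss with prototypes `θ'_k = λK θ_k`. -/
theorem stmt6 (N K d : ℕ) (hN : 0 < N) (hK : 0 < K) (hd : 0 < d)
    (lam : ℝ) (hlam : 0 < lam)
    (z : Fin N → EuclideanSpace ℝ (Fin d))
    (θ : Fin K → EuclideanSpace ℝ (Fin d))
    (b : Fin K → ℝ)
    (Q : Fin N → Fin K → ℝ) (hQ : RowStochastic Q) (hQpos : PosMat Q)
    (hbal : ∀ k, ∑ i, Q i k = (N : ℝ) / (K : ℝ))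
    (hb : ∀ k, b k = (1 / 2) * Real.log (marg Q k))
    (Z : Fin N → ℝ) (hZ : ∀ i, Z i = ∑ j, Real.exp (⟪θ j, z i⟫ + b j))
    (P : Fin N → Fin K → ℝ)
    (hP : ∀ i k, P i k = Real.exp (⟪θ k, z i⟫ + b k) / Z i) :
    (∑ k, marg Q k * Real.log (marg Q k))
      - (1 / (N : ℝ)) * ∑ i, ∑ k, Q i k * Real.log (P i k)
      + KLpen Q P + lam * ∑ k, ‖θ k‖ ^ 2 =
    (2 / (N : ℝ)) * ∑ i, Real.log (Z i)
      + (1 / ((N : ℝ) * lam * (K : ℝ))) *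
          ((∑ i, ∑ k, Q i k * ‖z i - (lam * (K : ℝ)) • θ k‖ ^ 2)
            + lam * (K : ℝ) * ∑ i, ∑ k, Q i k * Real.log (Q i k)
            - ∑ i, ‖z i‖ ^ 2) := by
  have hN0 : (N : ℝ) ≠ 0 := Nat.cast_ne_zero.mpr hN.ne'
  have hK0 : (K : ℝ) ≠ 0 := Nat.cast_ne_zero.mpr hK.ne'
  have hmk : ∀ k, marg Q k = (K : ℝ)⁻¹ := by
    intro k
    rw [marg, hbal k]
    field_simp
  have hb' : ∀ k, b k = (1 / 2) * Real.log ((K : ℝ)⁻¹) := by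
    intro k; rw [hb k, hmk k]
  haveI : Nonempty (Fin K) := ⟨⟨0, hK⟩⟩
  have hZpos : ∀ i, 0 < Z i := by
    intro i
    rw [hZ i]
    exact Finset.sum_pos (fun j _ => Real.exp_pos _) univ_nonempty
  have hlogP : ∀ i k, Real.log (P i k) = ⟪θ k, z i⟫ + b k - Real.log (Z i) := by
    intro i k
    rw [hP i k, Real.log_div (Real.exp_ne_zero _) (hZpos i).ne', Real.log_exp]
  set A := ∑ i, ∑ k, Q i k * Real.log (Q i k) with hA
  set B := ∑ i, ∑ k, Q i k * ⟪θ k, z i⟫ with hBdef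
  set L := ∑ i, Real.log (Z i) with hL
  set T := ∑ k, ‖θ k‖ ^ 2 with hT
  set S := ∑ i, ‖z i‖ ^ 2 with hS
  -- marginal entropy term
  have h1 : ∑ k, marg Q k * Real.log (marg Q k) = Real.log ((K : ℝ)⁻¹) := by
    simp only [hmk, Finset.sum_const, Finset.card_univ, Fintype.card_fin, nsmul_eq_mul]
    field_simp
  -- cross-entropy term
  have h2 : ∑ i, ∑ k, Q i k * Real.log (P i k)
      = B + (N : ℝ) * (1 / 2) * Real.log ((K : ℝ)⁻¹) - L := by
    have hrow : ∀ i, ∑ k, Q i k * Real.log (P i k)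
        = (∑ k, Q i k * ⟪θ k, z i⟫) + (∑ k, Q i k * b k) - Real.log (Z i) := by
      intro i
      have : ∀ k, Q i k * Real.log (P i k)
          = Q i k * ⟪θ k, z i⟫ + Q i k * b k - Q i k * Real.log (Z i) := by
        intro k; rw [hlogP i k]; ring
      rw [Finset.sum_congr rfl fun k _ => this k]
      rw [Finset.sum_sub_distrib, Finset.sum_add_distrib, ← Finset.sum_mul, hQ.2 i, one_mul]
    rw [Finset.sum_congr rfl fun i _ => hrow i]
    rw [Finset.sum_sub_distrib, Finset.sum_add_distrib]
    have hbterm : ∑ i, ∑ k, Q i k * b k = (N : ℝ) * (1 / 2) * Real.log ((K : ℝ)⁻¹) := by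
      rw [Finset.sum_comm]
      have : ∀ k, ∑ i, Q i k * b k = ((N : ℝ) / (K : ℝ)) * ((1 / 2) * Real.log ((K : ℝ)⁻¹)) := by
        intro k
        rw [← Finset.sum_mul, hbal k, hb' k]
      rw [Finset.sum_congr rfl fun k _ => this k, Finset.sum_const, Finset.card_univ,
        Fintype.card_fin, nsmul_eq_mul]
      field_simp
    rw [hbterm, ← hBdef, ← hL]
  -- KL term
  have h3 : KLpen Q P = (1 / (N : ℝ)) *
      (A - (B + (N : ℝ) * (1 / 2) * Real.log ((K : ℝ)⁻¹) - L)) := by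
    rw [KLpen]
    congr 1
    have : ∀ i k, Q i k * Real.log (Q i k / P i k)
        = Q i k * Real.log (Q i k) - Q i k * Real.log (P i k) := by
      intro i k
      have hPpos : 0 < P i k := by
        rw [hP i k]; exact div_pos (Real.exp_pos _) (hZpos i)
      rw [Real.log_div (hQpos i k).ne' hPpos.ne']; ring
    rw [Finset.sum_congr rfl fun i _ => Finset.sum_congr rfl fun k _ => this i k]
    simp only [Finset.sum_sub_distrib]
    rw [h2, ← hA]
  -- k-means term
  have h4 : ∑ i, ∑ k, Q i k * ‖z i - (lam * (K : ℝ)) • θ k‖ ^ 2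
      = S - 2 * (lam * (K : ℝ)) * B + (lam * (K : ℝ)) ^ 2 * ((N : ℝ) / (K : ℝ)) * T := by
    have hpt : ∀ i k, Q i k * ‖z i - (lam * (K : ℝ)) • θ k‖ ^ 2
        = Q i k * ‖z i‖ ^ 2 - 2 * (lam * (K : ℝ)) * (Q i k * ⟪θ k, z i⟫)
          + (lam * (K : ℝ)) ^ 2 * (Q i k * ‖θ k‖ ^ 2) := by
      intro i k
      have hnorm : ‖z i - (lam * (K : ℝ)) • θ k‖ ^ 2
          = ‖z i‖ ^ 2 - 2 * ((lam * (K : ℝ)) * ⟪θ k, z i⟫)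
            + (lam * (K : ℝ)) ^ 2 * ‖θ k‖ ^ 2 := by
        rw [norm_sub_sq_real, real_inner_smul_right, real_inner_comm,
          norm_smul, mul_pow, Real.norm_eq_abs, sq_abs]
      rw [hnorm]; ring
    rw [Finset.sum_congr rfl fun i _ => Finset.sum_congr rfl fun k _ => hpt i k]
    simp only [Finset.sum_add_distrib, Finset.sum_sub_distrib, ← Finset.mul_sum]
    have e1 : ∑ i, ∑ k, Q i k * ‖z i‖ ^ 2 = S := by
      rw [hS]
      refine Finset.sum_congr rfl fun i _ => ?_
      rw [← Finset.sum_mul, hQ.2 i, one_mul]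
    have e2 : ∑ i, ∑ k, Q i k * ‖θ k‖ ^ 2 = ((N : ℝ) / (K : ℝ)) * T := by
      rw [Finset.sum_comm, hT, Finset.mul_sum]
      refine Finset.sum_congr rfl fun k _ => ?_
      rw [← Finset.sum_mul, hbal k]
    rw [e1, e2, ← hBdef]
    ring
  rw [h1, h2, h3, h4]
  have hlam0 : lam ≠ 0 := hlam.ne'
  field_simp
  ring
end

section
/- Let N and K be positive integers and let Q and P be positive row-stochastic N×K matrices. Then the penalized ADM objective admits the expansion F(Q,P) = (2/N)·Σ_{i,k} q_{ik} log p_{ik} − Σ_{k=1}^K q̂_k log q̂_k − (1/N)·Σ_{i,k} q_{ik} log q_{ik}; consequently, when Q = P the objective recovers exactly the empirical mutual information: F(P,P) = I(P) = (1/N)·Σ_{i,k} p_{ik} log p_{ik} − Σ_{k=1}^K p̂_k log p̂_k, so the equality-constrained two-variable problem with constraint Q = P is an exact reformulation of maximizing the empirical mutual information. -/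
open Finset

/-- the penalized ADM objective expands as
`F(Q,P) = (2/N) Σ_{i,k} q_{ik} log p_{ik} − Σ_k q̂_k log q̂_k
          − (1/N) Σ_{i,k} q_{ik} log q_{ik}`,
and at `Q = P` it recovers exactly the empirical mutual information:
`F(P,P) = I(P)`. -/
theorem stmt13 (N K : ℕ) (hN : 0 < N) (hK : 0 < K)
    (Q P : Fin N → Fin K → ℝ)
    (hQ : RowStochastic Q) (hQpos : PosMat Q)
    (hP : RowStochastic P) (hPpos : PosMat P) :
    (Fobj Q P =
      (2 / (N : ℝ)) * ∑ i, ∑ k, Q i k * Real.log (P i k)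
        - ∑ k, marg Q k * Real.log (marg Q k)
        - (1 / (N : ℝ)) * ∑ i, ∑ k, Q i k * Real.log (Q i k)) ∧
    Fobj P P = MI P := by
  constructor
  · have hKL : KLpen Q P = (1 / (N : ℝ)) * ∑ i, ∑ k, Q i k * Real.log (Q i k)
        - (1 / (N : ℝ)) * ∑ i, ∑ k, Q i k * Real.log (P i k) := by
      unfold KLpen
      rw [← mul_sub, ← Finset.sum_sub_distrib]
      congr 1
      refine Finset.sum_congr rfl fun i _ => ?_
      rw [← Finset.sum_sub_distrib]
      refine Finset.sum_congr rfl fun k _ => ?_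
      rw [Real.log_div (hQpos i k).ne' (hPpos i k).ne']
      ring
    unfold Fobj
    rw [hKL]
    ring
  · have hKL : KLpen P P = 0 := by
      unfold KLpen
      have : ∀ i k, P i k / P i k = 1 := fun i k => div_self (hPpos i k).ne'
      simp [this]
    unfold Fobj MI
    rw [hKL]
    ring
end
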